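/- Let S, I, N, W > 0 be real constants. The function f(δ) = W·δ·log₂(1 + S/(I + W·N·δ)) is strictly increasing in δ on (0, ∞). Equivalently, its derivative (W/ln 2)·[ln(1 + S/(I + W·N·δ)) − S·W·N·δ / ((S + I + W·N·δ)(I + W·N·δ))] is strictly positive for all δ > 0. -/

import Mathlib

/-!
Write `u = I + W N δ`. Up to the factor `W / log 2`, the rate is `δ ↦ δ log (1 + S / u)`, whose
derivative is `log (1 + S / u) - S (W N δ) / ((S + u) u)`. Since `W N δ ≤ u`, the subtracted term
is at most `S / (S + u) = x / (1 + x)` with `x = S / u`, and `x / (1 + x) ≤ 2x / (x + 2) < log (1 + x)`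
for `x > 0`.
-/

open Real Set

lemma log_one_add_div_sub_pos {S u c : ℝ} (hS : 0 < S) (hu : 0 < u) (hcu : c ≤ u) :
    0 < log (1 + S / u) - S * c / ((S + u) * u) := by
  have hSu : 0 < S + u := by positivity
  have h_le : S * c / ((S + u) * u) ≤ S / (S + u) := by
    rw [div_le_div_iff₀ (by positivity) hSu]
    nlinarith [mul_pos hS hSu]
  have h_lt : S / (S + u) < log (1 + S / u) := calc
    S / (S + u) ≤ 2 * (S / u) / (S / u + 2) := by
      rw [div_le_div_iff₀ hSu (by positivity)]
      field_simp
      nlinarith [mul_pos hS hu]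
    _ < log (1 + S / u) := lt_log_one_add_of_pos (by positivity)
  linarith

lemma hasDerivAt_mul_log_one_add_div {S a b δ : ℝ} (hu : a + b * δ ≠ 0)
    (hSu : S + (a + b * δ) ≠ 0) :
    HasDerivAt (fun x => x * log (1 + S / (a + b * x)))
      (log (1 + S / (a + b * δ)) - S * (b * δ) / ((S + (a + b * δ)) * (a + b * δ))) δ := by
  have h_lin : HasDerivAt (fun x => a + b * x) b δ := by
    simpa using ((hasDerivAt_id δ).const_mul b).const_add a
  have h_arg : 1 + S / (a + b * δ) ≠ 0 := by
    rw [one_add_div hu, add_comm]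
    exact div_ne_zero hSu hu
  have h_quot : HasDerivAt (fun x => 1 + S / (a + b * x))
      ((0 * (a + b * δ) - S * b) / (a + b * δ) ^ 2) δ :=
    ((hasDerivAt_const δ S).div h_lin hu).const_add 1
  have h_prod : HasDerivAt (fun x => x * log (1 + S / (a + b * x)))
      (1 * log (1 + S / (a + b * δ)) +
        δ * ((0 * (a + b * δ) - S * b) / (a + b * δ) ^ 2 / (1 + S / (a + b * δ)))) δ :=
    (hasDerivAt_id' δ).mul (h_quot.log h_arg)
  convert h_prod using 1
  rw [one_add_div hu, add_comm (a + b * δ) S]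
  field_simp
  ring

lemma strictMonoOn_mul_log_one_add_div {S a b : ℝ} (hS : 0 < S) (ha : 0 < a) (hb : 0 ≤ b) :
    StrictMonoOn (fun x => x * log (1 + S / (a + b * x))) (Ioi 0) := by
  have hu : ∀ δ ∈ Ioi (0 : ℝ), 0 < a + b * δ := fun δ hδ =>
    add_pos_of_pos_of_nonneg ha (mul_nonneg hb (le_of_lt hδ))
  have h_deriv : ∀ δ ∈ Ioi (0 : ℝ), HasDerivAt (fun x => x * log (1 + S / (a + b * x)))
      (log (1 + S / (a + b * δ)) - S * (b * δ) / ((S + (a + b * δ)) * (a + b * δ))) δ :=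
    fun δ hδ => hasDerivAt_mul_log_one_add_div (hu δ hδ).ne' (add_pos hS (hu δ hδ)).ne'
  refine strictMonoOn_of_deriv_pos (convex_Ioi 0)
    (fun δ hδ => (h_deriv δ hδ).continuousAt.continuousWithinAt) fun δ hδ => ?_
  rw [interior_Ioi] at hδ
  rw [(h_deriv δ hδ).deriv]
  exact log_one_add_div_sub_pos hS (hu δ hδ) (by linarith)

theorem stmt_1 (S I N W : ℝ) (hS : 0 < S) (hI : 0 < I) (hN : 0 < N) (hW : 0 < W) :
    StrictMonoOn (fun δ : ℝ => W * δ * Real.logb 2 (1 + S / (I + W * N * δ))) (Set.Ioi 0) ∧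
    ∀ δ : ℝ, 0 < δ →
      0 < (W / Real.log 2) *
        (Real.log (1 + S / (I + W * N * δ)) -
          S * W * N * δ / ((S + I + W * N * δ) * (I + W * N * δ))) := by
  have h_scale : 0 < W / log 2 := div_pos hW (log_pos one_lt_two)
  have h_rate : (fun δ : ℝ => W * δ * logb 2 (1 + S / (I + W * N * δ))) =
      fun δ => W / log 2 * (δ * log (1 + S / (I + W * N * δ))) := by
    funext δ
    rw [logb]
    ring
  refine ⟨?_, fun δ hδ => mul_pos h_scale ?_⟩
  · rw [h_rate]
    exact fun x hx y hy hxy => mul_lt_mul_of_pos_left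
      (strictMonoOn_mul_log_one_add_div hS hI (by positivity) hx hy hxy) h_scale
  · have := log_one_add_div_sub_pos hS (u := I + W * N * δ) (c := W * N * δ) (by positivity)
      (by linarith)
    rwa [← mul_assoc, ← mul_assoc, ← add_assoc] at this
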